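/- arXiv:1909.09004 — 3 statements merged into one kernel-verified Lean document; each statement's English description precedes it below -/
import Mathlib

section
/- The code C6 = {∅, {4}, {2,3}, {1,5}, {1,2}, {1,2,5}, {2,3,4}, {1,4,5}, {1,2,3}} on five neurons is not a closed convex code: there do not exist closed convex sets U₁,…,U₅ ⊆ ℝᵈ (for any d) whose code of the cover equals C6. -/
/-!
Reading off the code: `U₁ \ U₀ ⊆ U₂`, `U₀ \ U₁ ⊆ U₄`, `U₂ ∩ U₄ = ∅` and `U₀ ∩ U₁ ∩ U₃ = ∅`, and the
codewords `{0,1,2}, {0,1,4}, {1,2,3}, {0,3,4}` give points `a, b, c, e`. On the convex hull `B` of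
these four points a functional `f` strictly separates `U₂` (`f < u`) from `U₄` (`f > v`). So on
`B ∩ {f = u}` the set `U₁` lies in `U₀`, and on `B ∩ {f = v}` the set `U₀` lies in `U₁`. The
homothety centred at `c` therefore maps `Q = U₀ ∩ B ∩ {f = v}` into `P = U₁ ∩ B ∩ {f = u}`, and the
one centred at `e` maps `P` back into `Q`. Their composite is a homothety of ratio `< 1` centred on
`[c, e]`; it maps the closed set `Q` (nonempty, as `[a, b] ⊆ U₀ ∩ U₁` crosses `{f = v}`) into
itself, so its centre lies in `Q ⊆ U₀ ∩ U₁`. Since `[c, e] ⊆ U₃`, this contradicts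
`U₀ ∩ U₁ ∩ U₃ = ∅`.
-/

def codeOfCover {n : ℕ} {X : Type*} (U : Fin n → Set X) : Set (Set (Fin n)) :=
  {σ | ∃ x : X, ∀ i, x ∈ U i ↔ i ∈ σ}

open Set AffineMap Filter Topology

section

variable {E : Type*} [NormedAddCommGroup E] [NormedSpace ℝ E]

theorem mem_of_mapsTo_homothety {s : Set E} (hs : IsClosed s) (hne : s.Nonempty) {c : E} {r : ℝ}
    (hr : |r| < 1) (h : MapsTo (homothety c r) s s) : c ∈ s := by
  obtain ⟨x, hx⟩ := hne
  have hpow : ∀ n : ℕ, homothety c (r ^ n) x ∈ s := by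
    intro n
    induction n with
    | zero => simpa using hx
    | succ n ih => rw [pow_succ', homothety_mul_apply]; exact h ih
  have hlim : Tendsto (fun n : ℕ => homothety c (r ^ n) x) atTop (𝓝 c) := by
    simpa [homothety_apply] using
      ((tendsto_pow_atTop_nhds_zero_of_abs_lt_one hr).smul_const (x - c)).add_const c
  exact hs.mem_of_tendsto hlim (Eventually.of_forall hpow)

theorem exists_mem_segment_homothety_comp_homothety (c e : E) {r₁ r₂ : ℝ} (h₁ : r₁ ∈ Icc 0 1)
    (h₂ : r₂ ∈ Icc 0 1) (h : r₂ * r₁ ≠ 1) :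
    ∃ q ∈ segment ℝ c e, (homothety e r₂).comp (homothety c r₁) = homothety q (r₂ * r₁) := by
  have hne : 1 - r₂ * r₁ ≠ 0 := sub_ne_zero.2 h.symm
  refine ⟨lineMap c e ((1 - r₂) / (1 - r₂ * r₁)), ?_, ?_⟩
  · have hpos : 0 < 1 - r₂ * r₁ := by
      rcases (mul_le_one₀ h₂.2 h₁.1 h₁.2).lt_or_eq with hlt | heq
      · linarith
      · exact absurd heq h
    refine (convex_segment c e).lineMap_mem (left_mem_segment ℝ c e) (right_mem_segment ℝ c e)
      ⟨div_nonneg (by linarith [h₂.2]) hpos.le, (div_le_one hpos).2 ?_⟩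
    nlinarith [h₁.2, h₂.1]
  · ext x
    simp only [coe_comp, Function.comp_apply, homothety_apply, lineMap_apply, vsub_eq_sub,
      vadd_eq_add]
    match_scalars <;> field_simp <;> ring

theorem mapsTo_homothety_inter_preimage (f : E →L[ℝ] ℝ) {K : Set E} (hK : Convex ℝ K) {c : E}
    (hc : c ∈ K) {s t : ℝ} (hct : f c ≠ t) (hr : (s - f c) / (t - f c) ∈ Icc (0 : ℝ) 1) :
    MapsTo (homothety c ((s - f c) / (t - f c))) (K ∩ f ⁻¹' {t}) (K ∩ f ⁻¹' {s}) := by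
  rintro x ⟨hxK, hxt : f x = t⟩
  refine ⟨?_, ?_⟩
  · rw [homothety_eq_lineMap]
    exact hK.lineMap_mem hc hxK hr
  have : t - f c ≠ 0 := sub_ne_zero.2 hct.symm
  simp only [mem_preimage, homothety_apply, vsub_eq_sub, vadd_eq_add, map_add, map_smul, map_sub,
    smul_eq_mul, hxt, mem_singleton_iff]
  field_simp
  ring

theorem sub_div_sub_mem_Ico {x s t : ℝ} (h : x ≤ s ∧ s < t ∨ t < s ∧ s ≤ x) :
    (s - x) / (t - x) ∈ Ico 0 1 := by
  rcases h with ⟨hxs, hst⟩ | ⟨hts, hsx⟩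
  · exact ⟨div_nonneg (by linarith) (by linarith), (div_lt_one (by linarith)).2 (by linarith)⟩
  · exact ⟨div_nonneg_of_nonpos (by linarith) (by linarith),
      (div_lt_one_of_neg (by linarith)).2 (by linarith)⟩

theorem segment_inter_nonempty_of_sdiff_subset {S T L R : Set E} (hS : IsClosed S)
    (hSc : Convex ℝ S) (hTc : Convex ℝ T) (hL : IsClosed L) (hLc : Convex ℝ L) (hR : IsClosed R)
    (hRc : Convex ℝ R) (hLR : Disjoint L R) (hTS : T \ S ⊆ L) (hST : S \ T ⊆ R) {a b c e : E}
    (ha : a ∈ S ∩ T ∩ L) (hb : b ∈ S ∩ T ∩ R) (hc : c ∈ T ∩ L) (he : e ∈ S ∩ R) :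
    (segment ℝ c e ∩ (S ∩ T)).Nonempty := by
  set B := convexHull ℝ {a, b, c, e}
  have hBc : Convex ℝ B := convex_convexHull ℝ _
  have hBk : IsCompact B := (toFinite _).isCompact_convexHull ℝ
  obtain ⟨haB, hbB, hcB, heB⟩ : a ∈ B ∧ b ∈ B ∧ c ∈ B ∧ e ∈ B := by
    simpa [insert_subset_iff] using subset_convexHull ℝ ({a, b, c, e} : Set E)
  obtain ⟨f, u, v, hfL, huv, hfR⟩ := geometric_hahn_banach_compact_closed (hLc.inter hBc)
    (hBk.of_isClosed_subset (hL.inter hBk.isClosed) inter_subset_right) (hRc.inter hBc)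
    (hR.inter hBk.isClosed) (hLR.mono inter_subset_left inter_subset_left)
  set P := (T ∩ B) ∩ f ⁻¹' {u}
  set Q := (S ∩ B) ∩ f ⁻¹' {v}
  have hPS : P ⊆ S := fun x ⟨⟨hxT, hxB⟩, (hxu : f x = u)⟩ => by
    by_contra hxS
    exact (hfL x ⟨hTS ⟨hxT, hxS⟩, hxB⟩).ne hxu
  have hQT : Q ⊆ T := fun x ⟨⟨hxS, hxB⟩, (hxv : f x = v)⟩ => by
    by_contra hxT
    exact (hfR x ⟨hST ⟨hxS, hxT⟩, hxB⟩).ne' hxv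
  have hfc : f c < u := hfL c ⟨hc.2, hcB⟩
  have hfe : v < f e := hfR e ⟨he.2, heB⟩
  have hr₁ := sub_div_sub_mem_Ico (Or.inl ⟨hfc.le, huv⟩)
  have hr₂ := sub_div_sub_mem_Ico (Or.inr ⟨huv, hfe.le⟩)
  have hQP : MapsTo (homothety c ((u - f c) / (v - f c))) Q P :=
    (mapsTo_homothety_inter_preimage f (hTc.inter hBc) ⟨hc.1, hcB⟩ (by linarith)
      (Ico_subset_Icc_self hr₁)).mono_left fun x hx => ⟨⟨hQT hx, hx.1.2⟩, hx.2⟩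
  have hPQ : MapsTo (homothety e ((v - f e) / (u - f e))) P Q :=
    (mapsTo_homothety_inter_preimage f (hSc.inter hBc) ⟨he.1, heB⟩ (by linarith)
      (Ico_subset_Icc_self hr₂)).mono_left fun x hx => ⟨⟨hPS hx, hx.1.2⟩, hx.2⟩
  have hQ : IsClosed Q := (hS.inter hBk.isClosed).inter (isClosed_singleton.preimage f.continuous)
  have hQne : Q.Nonempty := by
    obtain ⟨x, hx, hxv⟩ := ((hSc.inter hTc).inter hBc).isPreconnected.intermediate_value
      ⟨ha.1, haB⟩ ⟨hb.1, hbB⟩ f.continuous.continuousOn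
      ⟨(hfL a ⟨ha.2, haB⟩).le.trans huv.le, (hfR b ⟨hb.2, hbB⟩).le⟩
    exact ⟨x, ⟨hx.1.1, hx.2⟩, hxv⟩
  have hr : _ * _ ∈ Ico (0 : ℝ) 1 :=
    ⟨mul_nonneg hr₂.1 hr₁.1, mul_lt_one_of_nonneg_of_lt_one_left hr₂.1 hr₂.2 hr₁.2.le⟩
  obtain ⟨q, hq, hcomp⟩ := exists_mem_segment_homothety_comp_homothety c e
    (Ico_subset_Icc_self hr₁) (Ico_subset_Icc_self hr₂) hr.2.ne
  have hqQ : q ∈ Q := mem_of_mapsTo_homothety hQ hQne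
    (abs_lt.2 ⟨by linarith [hr.1], hr.2⟩) (hcomp ▸ hPQ.comp hQP)
  exact ⟨q, hq, hqQ.1.1, hQT hqQ⟩

end

theorem setOf_mem_mem_codeOfCover {n : ℕ} {X : Type*} (U : Fin n → Set X) (x : X) :
    {i | x ∈ U i} ∈ codeOfCover U :=
  ⟨x, fun _ => Iff.rfl⟩

theorem exists_forall_mem_of_mem_codeOfCover {n : ℕ} {X : Type*} {U : Fin n → Set X}
    {σ : Set (Fin n)} (h : σ ∈ codeOfCover U) : ∃ x, ∀ i ∈ σ, x ∈ U i :=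
  let ⟨x, hx⟩ := h
  ⟨x, fun i => (hx i).2⟩

/-- The code `C6`, with the neurons `1,…,5` renumbered `0,…,4`. -/
def codeC6 : Set (Set (Fin 5)) :=
  {∅, {3}, {1, 2}, {0, 4}, {0, 1}, {0, 1, 4}, {1, 2, 3}, {0, 3, 4}, {0, 1, 2}}

section CodeC6

variable {X : Type*} {U : Fin 5 → Set X}

theorem diff_one_zero_subset_two (hU : codeOfCover U = codeC6) : U 1 \ U 0 ⊆ U 2 := by
  rintro x ⟨h1, h0⟩
  have key : ∀ σ ∈ codeC6, 1 ∈ σ → 0 ∉ σ → 2 ∈ σ := by simp [codeC6]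
  exact key _ (hU ▸ setOf_mem_mem_codeOfCover U x) h1 h0

theorem diff_zero_one_subset_four (hU : codeOfCover U = codeC6) : U 0 \ U 1 ⊆ U 4 := by
  rintro x ⟨h0, h1⟩
  have key : ∀ σ ∈ codeC6, 0 ∈ σ → 1 ∉ σ → 4 ∈ σ := by simp [codeC6]
  exact key _ (hU ▸ setOf_mem_mem_codeOfCover U x) h0 h1

theorem disjoint_two_four (hU : codeOfCover U = codeC6) : Disjoint (U 2) (U 4) := by
  refine disjoint_left.2 fun x h2 h4 => ?_
  have key : ∀ σ ∈ codeC6, 2 ∈ σ → 4 ∉ σ := by simp [codeC6]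
  exact key _ (hU ▸ setOf_mem_mem_codeOfCover U x) h2 h4

theorem disjoint_inter_zero_one_three (hU : codeOfCover U = codeC6) :
    Disjoint (U 0 ∩ U 1) (U 3) := by
  refine disjoint_left.2 fun x ⟨h0, h1⟩ h3 => ?_
  have key : ∀ σ ∈ codeC6, 0 ∈ σ → 1 ∈ σ → 3 ∉ σ := by simp [codeC6]
  exact key _ (hU ▸ setOf_mem_mem_codeOfCover U x) h0 h1 h3

end CodeC6

/-- The code `C6` (neurons `1,…,5` written as `0,…,4`) is not a closed convex code. -/
theorem stmt_4 :
    ¬ ∃ (d : ℕ) (U : Fin 5 → Set (EuclideanSpace ℝ (Fin d))),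
      (∀ i, IsClosed (U i)) ∧ (∀ i, Convex ℝ (U i)) ∧
      codeOfCover U = ({∅, {3}, {1, 2}, {0, 4}, {0, 1}, {0, 1, 4}, {1, 2, 3},
        {0, 3, 4}, {0, 1, 2}} : Set (Set (Fin 5))) := by
  rintro ⟨d, U, hcl, hcv, hcode⟩
  change codeOfCover U = codeC6 at hcode
  have atom : ∀ σ ∈ codeC6, ∃ x, ∀ i ∈ σ, x ∈ U i := fun σ hσ =>
    exists_forall_mem_of_mem_codeOfCover (hcode ▸ hσ)
  obtain ⟨a, ha0, ha1, ha2⟩ : ∃ a, a ∈ U 0 ∧ a ∈ U 1 ∧ a ∈ U 2 := by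
    simpa using atom {0, 1, 2} (by simp [codeC6])
  obtain ⟨b, hb0, hb1, hb4⟩ : ∃ b, b ∈ U 0 ∧ b ∈ U 1 ∧ b ∈ U 4 := by
    simpa using atom {0, 1, 4} (by simp [codeC6])
  obtain ⟨c, hc1, hc2, hc3⟩ : ∃ c, c ∈ U 1 ∧ c ∈ U 2 ∧ c ∈ U 3 := by
    simpa using atom {1, 2, 3} (by simp [codeC6])
  obtain ⟨e, he0, he3, he4⟩ : ∃ e, e ∈ U 0 ∧ e ∈ U 3 ∧ e ∈ U 4 := by
    simpa using atom {0, 3, 4} (by simp [codeC6])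
  obtain ⟨q, hq, hq01⟩ := segment_inter_nonempty_of_sdiff_subset (hcl 0) (hcv 0) (hcv 1) (hcl 2)
    (hcv 2) (hcl 4) (hcv 4) (disjoint_two_four hcode) (diff_one_zero_subset_two hcode)
    (diff_zero_one_subset_four hcode) ⟨⟨ha0, ha1⟩, ha2⟩ ⟨⟨hb0, hb1⟩, hb4⟩ ⟨hc1, hc2⟩ ⟨he0, he4⟩
  exact disjoint_left.1 (disjoint_inter_zero_one_three hcode) hq01
    ((hcv 3).segment_subset hc3 he3 hq)
end

section
/- Key step in the non-closed-convexity proof for C6: suppose closed convex sets U₁,…,U₅ ⊆ ℝᵈ realize C6, so that U₁ ⊆ U₂ ∪ U₅ and U₂ ⊆ U₁ ∪ U₃, and U₁₂₃, U₁₄₅, U₂₃₄ are nonempty (where U_σ = ⋂_{i∈σ} Uᵢ). Then for any point x₁₂₃ ∈ U₁₂₃, any x₁₄₅ ∈ U₁₄₅, any x₂₃₄ ∈ U₂₃₄, there exist points x₁₂₅ ∈ U₁∩U₂∩U₅ on the segment [x₁₂₃, x₁₄₅], x₂₃ ∈ U₂∩U₃ on the segment [x₁₂₃, x₂₃₄],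 and y₁₂₃ ∈ U₁∩U₂∩U₃ on the segment [x₂₃, x₁₂₅]. -/
open Set

lemma seg_key {d : ℕ} {A B : Set (EuclideanSpace ℝ (Fin d))} (hA : IsClosed A)
    (hB : IsClosed B) {x y : EuclideanSpace ℝ (Fin d)}
    (hsub : segment ℝ x y ⊆ A ∪ B) (hx : x ∈ A) (hy : y ∈ B) :
    ∃ z ∈ segment ℝ x y, z ∈ A ∩ B := by
  have hpc : IsPreconnected (segment ℝ x y) := (convex_segment x y).isPreconnected
  have := isPreconnected_closed_iff.1 hpc A B hA hB hsub
    ⟨x, left_mem_segment ℝ x y, hx⟩ ⟨y, right_mem_segment ℝ x y, hy⟩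
  obtain ⟨z, hz, hzA, hzB⟩ := this
  exact ⟨z, hz, hzA, hzB⟩

/-- Key step in the proof that `C6` is not closed convex (neurons `1,…,5` written
as `0,…,4`): from closed convex sets with `U₁ ⊆ U₂ ∪ U₅` and `U₂ ⊆ U₁ ∪ U₃` and
points `x₁₂₃ ∈ U₁₂₃`, `x₁₄₅ ∈ U₁₄₅`, `x₂₃₄ ∈ U₂₃₄`, we produce `x₁₂₅`, `x₂₃`, and
`y₁₂₃` on the corresponding segments. -/
theorem stmt_5 (d : ℕ) (U : Fin 5 → Set (EuclideanSpace ℝ (Fin d)))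
    (hclosed : ∀ i, IsClosed (U i)) (hconv : ∀ i, Convex ℝ (U i))
    (h1 : U 0 ⊆ U 1 ∪ U 4) (h2 : U 1 ⊆ U 0 ∪ U 2)
    (x₁₂₃ x₁₄₅ x₂₃₄ : EuclideanSpace ℝ (Fin d))
    (hx₁₂₃ : x₁₂₃ ∈ U 0 ∩ U 1 ∩ U 2)
    (hx₁₄₅ : x₁₄₅ ∈ U 0 ∩ U 3 ∩ U 4)
    (hx₂₃₄ : x₂₃₄ ∈ U 1 ∩ U 2 ∩ U 3) :
    ∃ x₁₂₅ x₂₃ y₁₂₃ : EuclideanSpace ℝ (Fin d),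
      x₁₂₅ ∈ segment ℝ x₁₂₃ x₁₄₅ ∧ x₁₂₅ ∈ U 0 ∩ U 1 ∩ U 4 ∧
      x₂₃ ∈ segment ℝ x₁₂₃ x₂₃₄ ∧ x₂₃ ∈ U 1 ∩ U 2 ∧
      y₁₂₃ ∈ segment ℝ x₂₃ x₁₂₅ ∧ y₁₂₃ ∈ U 0 ∩ U 1 ∩ U 2 := by
  obtain ⟨⟨h123_0, h123_1⟩, h123_2⟩ := hx₁₂₃
  obtain ⟨⟨h145_0, h145_3⟩, h145_4⟩ := hx₁₄₅
  -- segment [x₁₂₃, x₁₄₅] ⊆ U 0 ⊆ U 1 ∪ U 4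
  have hseg0 : segment ℝ x₁₂₃ x₁₄₅ ⊆ U 0 :=
    (hconv 0).segment_subset h123_0 h145_0
  obtain ⟨z, hzseg, hz1, hz4⟩ := seg_key (hclosed 1) (hclosed 4)
    (fun p hp => h1 (hseg0 hp)) h123_1 h145_4
  -- segment [x₁₂₃, z] ⊆ U 1 ⊆ U 0 ∪ U 2
  have hseg1 : segment ℝ x₁₂₃ z ⊆ U 1 :=
    (hconv 1).segment_subset h123_1 hz1
  obtain ⟨y, hyseg, hy2, hy0⟩ := seg_key (hclosed 2) (hclosed 0)
    (fun p hp => (h2 (hseg1 hp)).symm) h123_2 (hseg0 hzseg)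
  exact ⟨z, x₁₂₃, y, hzseg, ⟨⟨hseg0 hzseg, hz1⟩, hz4⟩,
    left_mem_segment ℝ _ _, ⟨h123_1, h123_2⟩, hyseg, ⟨hy0, hseg1 hyseg⟩, hy2⟩
end

section
/- The code C10 = {∅, {1}, {2}, {5}, {1,3}, {2,4}, {3,4}, {1,2}, {1,3,4}, {2,4,5}, {2,3,4}, {1,3,5}} on five neurons is not a closed convex code. -/
open Metric Set

/-- The code `C10` (neurons `1,…,5` written as `0,…,4`) is not a closed convex code. -/
theorem stmt_19 :
    ¬ ∃ (d : ℕ) (U : Fin 5 → Set (EuclideanSpace ℝ (Fin d))),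
      (∀ i, IsClosed (U i)) ∧ (∀ i, Convex ℝ (U i)) ∧
      codeOfCover U = ({∅, {0}, {1}, {4}, {0, 2}, {1, 3}, {2, 3}, {0, 1},
        {0, 2, 3}, {1, 3, 4}, {1, 2, 3}, {0, 2, 4}} : Set (Set (Fin 5))) := by
  rintro ⟨d, U, hcl, hcv, hcode⟩
  classical
  have mem_code : ∀ x : EuclideanSpace ℝ (Fin d),
      {i | x ∈ U i} ∈ ({∅, {0}, {1}, {4}, {0, 2}, {1, 3}, {2, 3}, {0, 1},
        {0, 2, 3}, {1, 3, 4}, {1, 2, 3}, {0, 2, 4}} : Set (Set (Fin 5))) := by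
    intro x
    rw [← hcode]
    exact ⟨x, fun i => Iff.rfl⟩
  -- Fact 1 : U₂ ⊆ U₀ ∪ U₃
  have F1 : ∀ x, x ∈ U 2 → x ∈ U 0 ∨ x ∈ U 3 := by
    intro x h2
    have hx := mem_code x
    simp only [Set.mem_insert_iff, Set.mem_singleton_iff, Set.ext_iff,
      Set.mem_setOf_eq, Set.mem_empty_iff_false, iff_false] at hx
    rcases hx with h|h|h|h|h|h|h|h|h|h|h|h <;>
      first
        | exact (h 2 h2).elim
        | exact ((h 2).mp h2).elim
        | exact absurd ((h 2).mp h2) (by decide)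
        | exact Or.inl ((h 0).mpr (by decide))
        | exact Or.inr ((h 3).mpr (by decide))
  -- Fact 2 : U₃ ⊆ U₁ ∪ U₂
  have F2 : ∀ x, x ∈ U 3 → x ∈ U 1 ∨ x ∈ U 2 := by
    intro x h3
    have hx := mem_code x
    simp only [Set.mem_insert_iff, Set.mem_singleton_iff, Set.ext_iff,
      Set.mem_setOf_eq, Set.mem_empty_iff_false, iff_false] at hx
    rcases hx with h|h|h|h|h|h|h|h|h|h|h|h <;>
      first
        | exact (h 3 h3).elim
        | exact ((h 3).mp h3).elim
        | exact absurd ((h 3).mp h3) (by decide)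
        | exact Or.inl ((h 1).mpr (by decide))
        | exact Or.inr ((h 2).mpr (by decide))
  -- Fact 3 : a point of U₁ ∩ U₂ ∩ U₃ is in neither U₀ nor U₄
  have F3 : ∀ x, x ∈ U 1 → x ∈ U 2 → x ∈ U 3 → x ∉ U 0 ∧ x ∉ U 4 := by
    intro x h1 h2 h3
    have hx := mem_code x
    simp only [Set.mem_insert_iff, Set.mem_singleton_iff, Set.ext_iff,
      Set.mem_setOf_eq, Set.mem_empty_iff_false, iff_false] at hx
    rcases hx with h|h|h|h|h|h|h|h|h|h|h|h <;>
      first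
        | exact (h 1 h1).elim
        | exact ((h 1).mp h1).elim
        | exact absurd ((h 1).mp h1) (by decide)
        | exact absurd ((h 2).mp h2) (by decide)
        | exact absurd ((h 3).mp h3) (by decide)
        | exact ⟨fun h0 => absurd ((h 0).mp h0) (by decide),
                 fun h4 => absurd ((h 4).mp h4) (by decide)⟩
  -- atom points
  have hmem134 : ({1, 3, 4} : Set (Fin 5)) ∈ codeOfCover U := by rw [hcode]; simp
  have hmem024 : ({0, 2, 4} : Set (Fin 5)) ∈ codeOfCover U := by rw [hcode]; simp
  have hmem123 : ({1, 2, 3} : Set (Fin 5)) ∈ codeOfCover U := by rw [hcode]; simp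
  obtain ⟨a, ha⟩ := hmem134
  obtain ⟨b, hb⟩ := hmem024
  obtain ⟨c₀, hc₀⟩ := hmem123
  have ha1 : a ∈ U 1 := (ha 1).mpr (by simp)
  have ha3 : a ∈ U 3 := (ha 3).mpr (by simp)
  have ha4 : a ∈ U 4 := (ha 4).mpr (by simp)
  have hb0 : b ∈ U 0 := (hb 0).mpr (by simp)
  have hb2 : b ∈ U 2 := (hb 2).mpr (by simp)
  have hb4 : b ∈ U 4 := (hb 4).mpr (by simp)
  have hc₀1 : c₀ ∈ U 1 := (hc₀ 1).mpr (by simp)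
  have hc₀2 : c₀ ∈ U 2 := (hc₀ 2).mpr (by simp)
  have hc₀3 : c₀ ∈ U 3 := (hc₀ 3).mpr (by simp)
  -- the segment M
  set M : Set (EuclideanSpace ℝ (Fin d)) := segment ℝ a b with hMdef
  have hMne : M.Nonempty := ⟨a, left_mem_segment ℝ a b⟩
  have hMcomp : IsCompact M := by
    rw [hMdef, segment_eq_image]
    exact isCompact_Icc.image (((continuous_const.sub continuous_id).smul continuous_const).add (continuous_id.smul continuous_const))
  have hMconv : Convex ℝ M := convex_segment a b
  have hMsub4 : M ⊆ U 4 := (hcv 4).segment_subset ha4 hb4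
  have hMball : ∀ m ∈ M, dist m a ≤ dist a b := by
    intro m hm
    have : M ⊆ closedBall a (dist a b) :=
      (convex_closedBall a (dist a b)).segment_subset (mem_closedBall_self dist_nonneg)
        (by simp [mem_closedBall, dist_comm])
    simpa [mem_closedBall] using this hm
  -- the closed set S
  set S : Set (EuclideanSpace ℝ (Fin d)) := U 1 ∩ U 2 ∩ U 3 with hSdef
  have hScl : IsClosed S := ((hcl 1).inter (hcl 2)).inter (hcl 3)
  have hc₀S : c₀ ∈ S := ⟨⟨hc₀1, hc₀2⟩, hc₀3⟩
  set f : EuclideanSpace ℝ (Fin d) → ℝ := fun x => infDist x M with hfdef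
  have hfcont : Continuous f := continuous_infDist_pt M
  have hlow : ∀ y, dist y a - dist a b ≤ f y := by
    intro y
    obtain ⟨m, hmM, hm⟩ := hMcomp.exists_infDist_eq_dist hMne y
    have h1 : dist y a ≤ dist y m + dist m a := dist_triangle _ _ _
    have h2 : dist m a ≤ dist a b := hMball m hmM
    have : f y = dist y m := hm
    linarith
  -- minimize f on S
  set R : ℝ := f c₀ + dist a b with hRdef
  have hKcomp : IsCompact (S ∩ closedBall a R) := (isCompact_closedBall a R).inter_left hScl
  have hc₀K : c₀ ∈ S ∩ closedBall a R := by
    refine ⟨hc₀S, ?_⟩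
    have := hlow c₀
    simp only [mem_closedBall]
    linarith
  obtain ⟨c, hcK, hcmin⟩ := hKcomp.exists_isMinOn ⟨c₀, hc₀K⟩ hfcont.continuousOn
  obtain ⟨hcS, _⟩ := hcK
  have hmin : ∀ y ∈ S, f c ≤ f y := by
    intro y hyS
    by_cases hy : y ∈ closedBall a R
    · exact hcmin ⟨hyS, hy⟩
    · have h1 : R < dist y a := by simpa [mem_closedBall, not_le] using hy
      have h2 := hlow y
      have h3 : f c ≤ f c₀ := hcmin hc₀K
      linarith
  obtain ⟨⟨hc1, hc2⟩, hc3⟩ := hcS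
  obtain ⟨hc0, hc4⟩ := F3 c hc1 hc2 hc3
  -- δ := f c > 0
  have hδpos : 0 < f c := by
    rcases lt_or_eq_of_le (infDist_nonneg : 0 ≤ f c) with h | h
    · exact h
    · exfalso
      have : c ∈ M := (hMcomp.isClosed.mem_iff_infDist_zero hMne).mpr h.symm
      exact hc4 (hMsub4 this)
  -- first connectedness step : find z ∈ [c,b] ∩ U₀ ∩ U₃
  have hseg1 : segment ℝ c b ⊆ U 2 := (hcv 2).segment_subset hc2 hb2
  have hsub1 : segment ℝ c b ⊆ U 0 ∪ U 3 := fun y hy => F1 y (hseg1 hy)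
  obtain ⟨z, hzseg, hz0, hz3⟩ :
      ∃ z ∈ segment ℝ c b, z ∈ U 0 ∧ z ∈ U 3 := by
    obtain ⟨z, hz, h03⟩ := isPreconnected_closed_iff.mp
      (convex_segment c b).isPreconnected (U 0) (U 3) (hcl 0) (hcl 3) hsub1
      ⟨b, right_mem_segment ℝ c b, hb0⟩ ⟨c, left_mem_segment ℝ c b, hc3⟩
    exact ⟨z, hz, h03.1, h03.2⟩
  have hz2 : z ∈ U 2 := hseg1 hzseg
  have hzc : z ≠ c := fun h => hc0 (h ▸ hz0)
  -- f z < f c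
  have hfz : f z < f c := by
    obtain ⟨u, v, hu, hv, huv, hz⟩ := hzseg
    have hvpos : 0 < v := by
      rcases eq_or_lt_of_le hv with h | h
      · exfalso
        apply hzc
        rw [← hz, ← h, zero_smul, add_zero, show u = (1:ℝ) by linarith, one_smul]
      · exact h
    obtain ⟨m, hmM, hm⟩ := hMcomp.exists_infDist_eq_dist hMne c
    have hm' : u • m + v • b ∈ M := hMconv hmM (right_mem_segment ℝ a b) hu hv huv
    have hdz : dist z (u • m + v • b) = u * dist c m := by
      have hzz : z - (u • m + v • b) = u • (c - m) := by rw [← hz]; module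
      rw [dist_eq_norm, hzz, norm_smul, Real.norm_eq_abs, abs_of_nonneg hu, dist_eq_norm]
    have hle : f z ≤ u * f c := by
      calc f z ≤ dist z (u • m + v • b) := infDist_le_dist_of_mem hm'
        _ = u * dist c m := hdz
        _ = u * f c := by rw [← hm]
    nlinarith
  -- second connectedness step : find w ∈ [z,a] ∩ U₁ ∩ U₂
  have hseg2 : segment ℝ z a ⊆ U 3 := (hcv 3).segment_subset hz3 ha3
  have hsub2 : segment ℝ z a ⊆ U 1 ∪ U 2 := fun y hy => F2 y (hseg2 hy)
  obtain ⟨w, hwseg, hw1, hw2⟩ :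
      ∃ w ∈ segment ℝ z a, w ∈ U 1 ∧ w ∈ U 2 := by
    obtain ⟨w, hw, h12⟩ := isPreconnected_closed_iff.mp
      (convex_segment z a).isPreconnected (U 1) (U 2) (hcl 1) (hcl 2) hsub2
      ⟨a, right_mem_segment ℝ z a, ha1⟩ ⟨z, left_mem_segment ℝ z a, hz2⟩
    exact ⟨w, hw, h12.1, h12.2⟩
  have hw3 : w ∈ U 3 := hseg2 hwseg
  have hwS : w ∈ S := ⟨⟨hw1, hw2⟩, hw3⟩
  -- f w ≤ f z, contradiction with minimality
  have hfw : f w ≤ f z := by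
    obtain ⟨p, q, hp, hq, hpq, hw⟩ := hwseg
    obtain ⟨mz, hmzM, hmz⟩ := hMcomp.exists_infDist_eq_dist hMne z
    have hm'' : p • mz + q • a ∈ M := hMconv hmzM (left_mem_segment ℝ a b) hp hq hpq
    have hdw : dist w (p • mz + q • a) = p * dist z mz := by
      have hww : w - (p • mz + q • a) = p • (z - mz) := by rw [← hw]; module
      rw [dist_eq_norm, hww, norm_smul, Real.norm_eq_abs, abs_of_nonneg hp, dist_eq_norm]
    have hle : f w ≤ p * f z := by
      calc f w ≤ dist w (p • mz + q • a) := infDist_le_dist_of_mem hm''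
        _ = p * dist z mz := hdw
        _ = p * f z := by rw [← hmz]
    have hfznn : (0:ℝ) ≤ f z := infDist_nonneg
    nlinarith
  exact absurd (hmin w hwS) (not_le.mpr (lt_of_le_of_lt hfw hfz))
end
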